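/- For every n ≥ 2, the number of rises in C_n (indices i with w(i) < w(i+1)) equals 2^{n-2}, and the same holds for D_n. -/

import Mathlib

/-- The pair `(C_n, D_n)` of sigma-words, with `C_0 = D_0 = []`,
`C_{k+1} = C_k · 1 · D_k`, `D_{k+1} = C_k · 2 · D_k`
(so `C_1 = [1]`, `D_1 = [2]`). -/
def sigmaCD : ℕ → List ℕ × List ℕ
  | 0 => ([], [])
  | k + 1 => ((sigmaCD k).1 ++ 1 :: (sigmaCD k).2, (sigmaCD k).1 ++ 2 :: (sigmaCD k).2)

/-- The sigma-word `C_n`. -/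
def sigmaC (n : ℕ) : List ℕ := (sigmaCD n).1

/-- The sigma-word `D_n`. -/
def sigmaD (n : ℕ) : List ℕ := (sigmaCD n).2

/-- Number of occurrences of `p` as a (not necessarily contiguous) subsequence of `w`,
counted with multiplicity of position sets. -/
def subseqCount (p w : List ℕ) : ℕ := (w.sublistsLen p.length).count p

/-- Number of occurrences of `p` as a factor (contiguous subword) of `w`,
i.e. the number of starting positions at which `p` occurs in `w`. -/
def factorCount (p w : List ℕ) : ℕ :=
  (List.range w.length).countP fun i => decide ((w.drop i).take p.length = p)

/-- The number of rises of `w`: indices `i` with `w(i) < w(i+1)`. -/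
def riseCount (w : List ℕ) : ℕ :=
  (List.range (w.length - 1)).countP fun i => decide (w.getD i 0 < w.getD (i + 1) 0)

/-!
For `n ≥ 2` both `C_n` and `D_n` begin with `1` and end with `2`, so in `C_{n+1} = C_n · 1 · D_n`
and `D_{n+1} = C_n · 2 · D_n` neither junction is a rise: the middle letter is at most the final
`2` of `C_n` and at least the initial `1` of `D_n`. Hence both rise counts of level `n + 1` equal
the sum of those of level `n`, and they double from `1` at `n = 2`.
-/

@[simp] lemma riseCount_nil : riseCount [] = 0 := rfl

@[simp] lemma riseCount_singleton (a : ℕ) : riseCount [a] = 0 := rfl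

lemma riseCount_cons_cons (a b : ℕ) (t : List ℕ) :
    riseCount (a :: b :: t) = (if a < b then 1 else 0) + riseCount (b :: t) := by
  unfold riseCount
  simp only [List.length_cons, Nat.add_sub_cancel, List.range_succ_eq_map,
    List.countP_cons, List.countP_map, Function.comp_def, List.getD_cons_succ,
    List.getD_cons_zero]
  by_cases h : a < b <;> simp [h, Nat.add_comm]

lemma riseCount_append_of_not_lt {u v : List ℕ}
    (h : ∀ a ∈ u.getLast?, ∀ b ∈ v.head?, ¬ a < b) :
    riseCount (u ++ v) = riseCount u + riseCount v := by
  induction u with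
  | nil => simp
  | cons a u ih =>
    cases u with
    | nil =>
      cases v with
      | nil => simp
      | cons b v => simp [riseCount_cons_cons, h a rfl b rfl]
    | cons c u =>
      simp only [List.cons_append, List.getLast?_cons_cons] at h ih ⊢
      rw [riseCount_cons_cons, riseCount_cons_cons, ih h]
      omega

lemma sigmaC_succ (n : ℕ) : sigmaC (n + 1) = sigmaC n ++ 1 :: sigmaD n := rfl

lemma sigmaD_succ (n : ℕ) : sigmaD (n + 1) = sigmaC n ++ 2 :: sigmaD n := rfl

lemma head?_sigmaC {n : ℕ} (hn : 1 ≤ n) : (sigmaC n).head? = some 1 := by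
  induction n, hn using Nat.le_induction with
  | base => rfl
  | succ n _ ih => simp [sigmaC_succ, ih]

lemma getLast?_sigmaD {n : ℕ} (hn : 1 ≤ n) : (sigmaD n).getLast? = some 2 := by
  induction n, hn using Nat.le_induction with
  | base => rfl
  | succ n _ ih => simp [sigmaD_succ, List.getLast?_cons, ih]

lemma head?_sigmaD {n : ℕ} (hn : 2 ≤ n) : (sigmaD n).head? = some 1 := by
  obtain ⟨m, rfl⟩ : ∃ m, n = m + 1 := ⟨n - 1, by omega⟩
  simp [sigmaD_succ, head?_sigmaC (n := m) (by omega)]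

lemma getLast?_sigmaC {n : ℕ} (hn : 2 ≤ n) : (sigmaC n).getLast? = some 2 := by
  obtain ⟨m, rfl⟩ : ∃ m, n = m + 1 := ⟨n - 1, by omega⟩
  simp [sigmaC_succ, List.getLast?_cons, getLast?_sigmaD (n := m) (by omega)]

lemma riseCount_sigmaC_append_cons_sigmaD {n x : ℕ} (hn : 2 ≤ n) (hx₁ : 1 ≤ x) (hx₂ : x ≤ 2) :
    riseCount (sigmaC n ++ x :: sigmaD n) = riseCount (sigmaC n) + riseCount (sigmaD n) := by
  have hC : ∀ a ∈ (sigmaC n).getLast?, ¬ a < x := by simp [getLast?_sigmaC hn]; omega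
  have hD : ∀ b ∈ (sigmaD n).head?, ¬ x < b := by simp [head?_sigmaD hn]; omega
  rw [riseCount_append_of_not_lt (by simpa using hC), ← List.singleton_append,
    riseCount_append_of_not_lt (by simpa using hD)]
  simp

theorem rises_sigma (n : ℕ) (hn : 2 ≤ n) :
    riseCount (sigmaC n) = 2 ^ (n - 2) ∧ riseCount (sigmaD n) = 2 ^ (n - 2) := by
  induction n, hn using Nat.le_induction with
  | base => decide
  | succ n hn ih =>
    have hdouble : 2 ^ (n + 1 - 2) = 2 ^ (n - 2) + 2 ^ (n - 2) := by
      rw [show n + 1 - 2 = n - 2 + 1 by omega, pow_succ, mul_two]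
    rw [sigmaC_succ, sigmaD_succ, riseCount_sigmaC_append_cons_sigmaD hn le_rfl one_le_two,
      riseCount_sigmaC_append_cons_sigmaD hn one_le_two le_rfl, ih.1, ih.2, hdouble]
    exact ⟨rfl, rfl⟩
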